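/- Let ψ₁ be a density matrix on A ⊗ C₁ and ψ₂ a density matrix on C₂ ⊗ B, and set ψ = ψ₁ ⊗ ψ₂ on A ⊗ B ⊗ C where the helper system is C = C₁ ⊗ C₂. Then I(AC⟩B)_ψ = I(C₂⟩B)_{ψ₂} − S(AC₁)_{ψ₁} and I(A⟩BC)_ψ = I(A⟩C₁)_{ψ₁}. Consequently, if ψ₁ is pure, L(ψ) := min{I(AC⟩B)_ψ, I(A⟩BC)_ψ} = min{ I(C₂⟩B)_{ψ₂} , I(A⟩C₁)_{ψ₁} }. -/

import Mathlib

/- Tripartite quantum states as matrices on `A × B × C`; von Neumann entropy via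
eigenvalues of Hermitian matrices, with logarithms in base 2. -/

open Matrix
open scoped ComplexOrder

/-- von Neumann entropy `S(ρ) = -Tr(ρ log₂ ρ)` of a (Hermitian) matrix, computed from
its eigenvalues. -/
noncomputable def vNEntropy {n : Type*} [Fintype n] [DecidableEq n] (ρ : Matrix n n ℂ) : ℝ :=
  if h : ρ.IsHermitian then -∑ i, (h.eigenvalues i) * Real.logb 2 (h.eigenvalues i) else 0

section
variable {A B C : Type*} [Fintype A] [Fintype B] [Fintype C]
  [DecidableEq A] [DecidableEq B] [DecidableEq C]

/-- Reduced state `ψ^{AB} = Tr_C ψ`. -/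
noncomputable def redAB (ψ : Matrix (A × B × C) (A × B × C) ℂ) : Matrix (A × B) (A × B) ℂ :=
  fun p q => ∑ c, ψ (p.1, p.2, c) (q.1, q.2, c)

/-- Reduced state `ψ^{BC} = Tr_A ψ`. -/
noncomputable def redBC (ψ : Matrix (A × B × C) (A × B × C) ℂ) : Matrix (B × C) (B × C) ℂ :=
  fun p q => ∑ a, ψ (a, p.1, p.2) (a, q.1, q.2)

/-- Reduced state `ψ^{B} = Tr_{AC} ψ`. -/
noncomputable def redB (ψ : Matrix (A × B × C) (A × B × C) ℂ) : Matrix B B ℂ :=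
  fun b b' => ∑ a, ∑ c, ψ (a, b, c) (a, b', c)

/-- Coherent information `I(A⟩B)_ψ = S(B)_ψ - S(AB)_ψ`. -/
noncomputable def cohAB (ψ : Matrix (A × B × C) (A × B × C) ℂ) : ℝ :=
  vNEntropy (redB ψ) - vNEntropy (redAB ψ)

/-- Coherent information `I(AC⟩B)_ψ = S(B)_ψ - S(ABC)_ψ`. -/
noncomputable def cohACB (ψ : Matrix (A × B × C) (A × B × C) ℂ) : ℝ :=
  vNEntropy (redB ψ) - vNEntropy ψ

/-- Coherent information `I(A⟩BC)_ψ = S(BC)_ψ - S(ABC)_ψ`. -/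
noncomputable def cohABC (ψ : Matrix (A × B × C) (A × B × C) ℂ) : ℝ :=
  vNEntropy (redBC ψ) - vNEntropy ψ

/-- Coherent information `I(C⟩AB)_ψ = S(AB)_ψ - S(ABC)_ψ`. -/
noncomputable def cohCAB (ψ : Matrix (A × B × C) (A × B × C) ℂ) : ℝ :=
  vNEntropy (redAB ψ) - vNEntropy ψ

/-- `L(ψ) = min { I(AC⟩B)_ψ , I(A⟩BC)_ψ }`. -/
noncomputable def Lq (ψ : Matrix (A × B × C) (A × B × C) ℂ) : ℝ :=
  min (cohACB ψ) (cohABC ψ)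

end

section
variable {α β : Type*} [Fintype α] [Fintype β] [DecidableEq α] [DecidableEq β]

/-- Partial trace over the left factor of a bipartite state on `α ⊗ β`. -/
noncomputable def trLeft (ρ : Matrix (α × β) (α × β) ℂ) : Matrix β β ℂ :=
  fun b b' => ∑ a, ρ (a, b) (a, b')

/-- Partial trace over the right factor of a bipartite state on `α ⊗ β`. -/
noncomputable def trRight (ρ : Matrix (α × β) (α × β) ℂ) : Matrix α α ℂ :=
  fun a a' => ∑ b, ρ (a, b) (a', b)

end

section
variable {A B C₁ C₂ : Type*} [Fintype A] [Fintype B] [Fintype C₁] [Fintype C₂]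
  [DecidableEq A] [DecidableEq B] [DecidableEq C₁] [DecidableEq C₂]

/-- The tensor product `ψ₁ ⊗ ψ₂` of `ψ₁` on `A ⊗ C₁` and `ψ₂` on `C₂ ⊗ B`, regarded as a
state on `A ⊗ B ⊗ C` with helper system `C = C₁ ⊗ C₂`. -/
noncomputable def prodState (ψ₁ : Matrix (A × C₁) (A × C₁) ℂ)
    (ψ₂ : Matrix (C₂ × B) (C₂ × B) ℂ) :
    Matrix (A × B × C₁ × C₂) (A × B × C₁ × C₂) ℂ :=
  fun p q => ψ₁ (p.1, p.2.2.1) (q.1, q.2.2.1) * ψ₂ (p.2.2.2, p.2.1) (q.2.2.2, q.2.1)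

end

/-!
Up to reordering tensor factors, `ψ = ψ₁ ⊗ ψ₂` and its `BC`-marginal `Tr_A ψ₁ ⊗ ψ₂` are Kronecker
products. The spectrum of a Kronecker product of Hermitian matrices consists of the products of
their eigenvalues, so `-∑ λμ log(λμ)` splits and entropy is additive on products of unit-trace
states. The `B`-marginal is `Tr_{C₂} ψ₂` because `Tr ψ₁ = 1`. A pure `ψ₁` is idempotent, so its
eigenvalues lie in `{0, 1}` and `S(ψ₁) = 0`.
-/

open Polynomial
open scoped Kronecker

theorem Real.mul_logb_mul (b x y : ℝ) :
    x * y * Real.logb b (x * y) = y * (x * Real.logb b x) + x * (y * Real.logb b y) := by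
  have h := Real.negMulLog_mul x y
  simp only [Real.negMulLog] at h
  simp only [Real.logb]
  linear_combination (-1 / Real.log b) * h

theorem Real.sum_mul_logb_mul_of_sum_eq_one {m n : Type*} [Fintype m] [Fintype n] (b : ℝ)
    {p : m → ℝ} {q : n → ℝ} (hp : ∑ i, p i = 1) (hq : ∑ j, q j = 1) :
    ∑ x : m × n, p x.1 * q x.2 * Real.logb b (p x.1 * q x.2)
      = ∑ i, p i * Real.logb b (p i) + ∑ j, q j * Real.logb b (q j) := by
  simp only [Fintype.sum_prod_type, Real.mul_logb_mul, Finset.sum_add_distrib, ← Finset.sum_mul,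
    ← Finset.mul_sum, hp, hq, one_mul]

theorem isIdempotentElem_vecMulVec_star {𝕜 n : Type*} [RCLike 𝕜] [Fintype n] {v : n → 𝕜}
    (hv : ∑ x, ‖v x‖ ^ 2 = 1) : IsIdempotentElem (vecMulVec v (star v)) := by
  have hv' : star v ⬝ᵥ v = 1 := by
    simpa [dotProduct, RCLike.conj_mul] using congrArg ((↑) : ℝ → 𝕜) hv
  rw [IsIdempotentElem, vecMulVec_mul_vecMulVec, hv', one_smul]

section Entropy

variable {m n : Type*} [Fintype m] [DecidableEq m] [Fintype n] [DecidableEq n]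

theorem Matrix.IsHermitian.charpoly_kronecker {𝕜 : Type*} [RCLike 𝕜] {A : Matrix m m 𝕜}
    {B : Matrix n n 𝕜} (hA : A.IsHermitian) (hB : B.IsHermitian) :
    (A ⊗ₖ B).charpoly
      = ∏ x : m × n, (X - C ((hA.eigenvalues x.1 * hB.eigenvalues x.2 : ℝ) : 𝕜)) := by
  conv_lhs => rw [hA.spectral_theorem, hB.spectral_theorem, Unitary.conjStarAlgAut_apply,
    Unitary.conjStarAlgAut_apply, mul_kronecker_mul, mul_kronecker_mul, charpoly_mul_comm,
    ← mul_assoc, ← mul_kronecker_mul, Unitary.coe_star_mul_self, Unitary.coe_star_mul_self,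
    one_kronecker_one, one_mul, diagonal_kronecker_diagonal, charpoly_diagonal]
  simp

theorem vNEntropy_eq_of_charpoly_eq_prod {ι : Type*} [Fintype ι] {ρ : Matrix n n ℂ}
    (hρ : ρ.IsHermitian) (d : ι → ℝ) (h : ρ.charpoly = ∏ i, (X - C (d i : ℂ))) :
    vNEntropy ρ = -∑ i, d i * Real.logb 2 (d i) := by
  have hroots := hρ.roots_charpoly_eq_eigenvalues
  rw [h, Polynomial.roots_prod _ _ (by simp [Finset.prod_ne_zero_iff, X_sub_C_ne_zero])] at hroots
  simp only [roots_X_sub_C, Multiset.bind_singleton] at hroots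
  have hre : Finset.univ.val.map hρ.eigenvalues = Finset.univ.val.map d := by
    simpa [Multiset.map_map, Function.comp_def] using congrArg (Multiset.map Complex.re) hroots.symm
  have := congrArg (fun s : Multiset ℝ => (s.map fun x => x * Real.logb 2 x).sum) hre
  rw [vNEntropy, dif_pos hρ]
  simpa only [Multiset.map_map, Function.comp_def, Finset.sum_map_val, neg_inj] using this

theorem vNEntropy_submatrix_equiv (ρ : Matrix n n ℂ) (e : m ≃ n) :
    vNEntropy (ρ.submatrix e e) = vNEntropy ρ := by
  by_cases hρ : ρ.IsHermitian
  · rw [vNEntropy_eq_of_charpoly_eq_prod (hρ.submatrix e) hρ.eigenvalues, vNEntropy, dif_pos hρ]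
    rw [show ρ.submatrix e e = reindex e.symm e.symm ρ from rfl, charpoly_reindex, hρ.charpoly_eq]
    rfl
  · have hρ' : ¬(ρ.submatrix e e).IsHermitian := by rwa [isHermitian_submatrix_equiv]
    rw [vNEntropy, dif_neg hρ', vNEntropy, dif_neg hρ]

theorem Matrix.IsHermitian.sum_eigenvalues_eq_one {ρ : Matrix n n ℂ} (hρ : ρ.IsHermitian)
    (htr : ρ.trace = 1) : ∑ i, hρ.eigenvalues i = 1 := by
  have h := hρ.trace_eq_sum_eigenvalues
  rw [htr] at h
  exact_mod_cast (show ((∑ i, hρ.eigenvalues i : ℝ) : ℂ) = 1 by simpa using h.symm)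

theorem vNEntropy_kronecker {ρ₁ : Matrix m m ℂ} {ρ₂ : Matrix n n ℂ} (h₁ : ρ₁.IsHermitian)
    (h₂ : ρ₂.IsHermitian) (htr₁ : ρ₁.trace = 1) (htr₂ : ρ₂.trace = 1) :
    vNEntropy (ρ₁ ⊗ₖ ρ₂) = vNEntropy ρ₁ + vNEntropy ρ₂ := by
  have h : (ρ₁ ⊗ₖ ρ₂).IsHermitian := by
    rw [IsHermitian, conjTranspose_kronecker, h₁.eq, h₂.eq]
  have hc : (ρ₁ ⊗ₖ ρ₂).charpoly
      = ∏ x : m × n, (X - C ((h₁.eigenvalues x.1 * h₂.eigenvalues x.2 : ℝ) : ℂ)) :=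
    h₁.charpoly_kronecker h₂
  rw [vNEntropy_eq_of_charpoly_eq_prod h _ hc,
    Real.sum_mul_logb_mul_of_sum_eq_one _ (h₁.sum_eigenvalues_eq_one htr₁)
      (h₂.sum_eigenvalues_eq_one htr₂),
    vNEntropy, dif_pos h₁, vNEntropy, dif_pos h₂, neg_add]

theorem vNEntropy_eq_zero_of_isIdempotentElem {ρ : Matrix n n ℂ} (hρ : ρ.IsHermitian)
    (hp : IsIdempotentElem ρ) : vNEntropy ρ = 0 := by
  rw [vNEntropy, dif_pos hρ, neg_eq_zero]
  refine Finset.sum_eq_zero fun i _ => ?_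
  have hi : hρ.eigenvalues i ∈ spectrum ℝ ρ := hρ.spectrum_real_eq_range_eigenvalues ▸ ⟨i, rfl⟩
  obtain h | h : hρ.eigenvalues i = 0 ∨ hρ.eigenvalues i = 1 := hp.spectrum_subset ℝ hi
  <;> simp [h]

end Entropy

theorem Matrix.IsHermitian.trLeft {α β : Type*} [Fintype α] {ρ : Matrix (α × β) (α × β) ℂ}
    (h : ρ.IsHermitian) : (trLeft ρ).IsHermitian := by
  ext b b'
  simp only [_root_.trLeft, conjTranspose_apply, star_sum]
  exact Finset.sum_congr rfl fun a _ => by rw [← conjTranspose_apply, h.eq]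

theorem trace_trLeft {α β : Type*} [Fintype α] [Fintype β] (ρ : Matrix (α × β) (α × β) ℂ) :
    (trLeft ρ).trace = ρ.trace := by
  simp only [trace, trLeft, diag_apply, Fintype.sum_prod_type]
  exact Finset.sum_comm

section ProductState

variable {A B C₁ C₂ : Type*} [Fintype A]
  {ψ₁ : Matrix (A × C₁) (A × C₁) ℂ} {ψ₂ : Matrix (C₂ × B) (C₂ × B) ℂ}

theorem redB_prodState [Fintype C₁] [Fintype C₂] (htr₁ : ψ₁.trace = 1) :
    redB (prodState ψ₁ ψ₂) = trLeft ψ₂ := by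
  have htr : ∑ a, ∑ c₁, ψ₁ (a, c₁) (a, c₁) = 1 := (Fintype.sum_prod_type _).symm.trans htr₁
  ext b b'
  simp only [redB, prodState, trLeft, Fintype.sum_prod_type, ← Finset.mul_sum, ← Finset.sum_mul,
    htr, one_mul]

theorem redBC_prodState :
    redBC (prodState ψ₁ ψ₂) = (trLeft ψ₁ ⊗ₖ ψ₂).submatrix
      ((Equiv.prodComm B (C₁ × C₂)).trans (Equiv.prodAssoc C₁ C₂ B))
      ((Equiv.prodComm B (C₁ × C₂)).trans (Equiv.prodAssoc C₁ C₂ B)) := by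
  ext ⟨b, c₁, c₂⟩ ⟨b', c₁', c₂'⟩
  simp [redBC, prodState, trLeft, Finset.sum_mul]

variable [Fintype B] [Fintype C₁] [Fintype C₂] [DecidableEq B] [DecidableEq C₁] [DecidableEq C₂]

theorem vNEntropy_prodState [DecidableEq A] (h₁ : ψ₁.IsHermitian) (htr₁ : ψ₁.trace = 1)
    (h₂ : ψ₂.IsHermitian) (htr₂ : ψ₂.trace = 1) :
    vNEntropy (prodState ψ₁ ψ₂) = vNEntropy ψ₁ + vNEntropy ψ₂ := by
  let e : A × B × C₁ × C₂ ≃ (A × C₁) × (C₂ × B) :=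
    ⟨fun p => ((p.1, p.2.2.1), (p.2.2.2, p.2.1)), fun q => (q.1.1, q.2.2, q.1.2, q.2.1),
      fun _ => rfl, fun _ => rfl⟩
  rw [← vNEntropy_kronecker h₁ h₂ htr₁ htr₂, ← vNEntropy_submatrix_equiv _ e]
  rfl

theorem vNEntropy_redBC_prodState (h₁ : ψ₁.IsHermitian) (htr₁ : ψ₁.trace = 1)
    (h₂ : ψ₂.IsHermitian) (htr₂ : ψ₂.trace = 1) :
    vNEntropy (redBC (prodState ψ₁ ψ₂)) = vNEntropy (trLeft ψ₁) + vNEntropy ψ₂ := by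
  rw [redBC_prodState, vNEntropy_submatrix_equiv,
    vNEntropy_kronecker h₁.trLeft h₂ ((trace_trLeft ψ₁).trans htr₁) htr₂]

end ProductState

section
variable {A B C₁ C₂ : Type*} [Fintype A] [Fintype B] [Fintype C₁] [Fintype C₂]
  [DecidableEq A] [DecidableEq B] [DecidableEq C₁] [DecidableEq C₂]

/-- For `ψ = ψ₁ ⊗ ψ₂` with `ψ₁` on `A ⊗ C₁` and `ψ₂` on `C₂ ⊗ B` (helper `C = C₁ ⊗ C₂`):
`I(AC⟩B)_ψ = I(C₂⟩B)_{ψ₂} - S(AC₁)_{ψ₁}` and `I(A⟩BC)_ψ = I(A⟩C₁)_{ψ₁}`.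
Consequently, if `ψ₁` is pure then
`L(ψ) = min { I(C₂⟩B)_{ψ₂} , I(A⟩C₁)_{ψ₁} }`. -/
theorem L_of_product (ψ₁ : Matrix (A × C₁) (A × C₁) ℂ) (ψ₂ : Matrix (C₂ × B) (C₂ × B) ℂ)
    (h₁ : ψ₁.PosSemidef) (h₁tr : ψ₁.trace = 1)
    (h₂ : ψ₂.PosSemidef) (h₂tr : ψ₂.trace = 1) :
    cohACB (prodState ψ₁ ψ₂)
        = (vNEntropy (trLeft ψ₂) - vNEntropy ψ₂) - vNEntropy ψ₁ ∧
    cohABC (prodState ψ₁ ψ₂)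
        = vNEntropy (trLeft ψ₁) - vNEntropy ψ₁ ∧
    (∀ v : A × C₁ → ℂ, (∑ x, ‖v x‖ ^ 2 = 1) → ψ₁ = Matrix.vecMulVec v (star v) →
      Lq (prodState ψ₁ ψ₂)
        = min (vNEntropy (trLeft ψ₂) - vNEntropy ψ₂)
            (vNEntropy (trLeft ψ₁) - vNEntropy ψ₁)) := by
  have hS := vNEntropy_prodState h₁.1 h₁tr h₂.1 h₂tr
  have hACB : cohACB (prodState ψ₁ ψ₂)
      = (vNEntropy (trLeft ψ₂) - vNEntropy ψ₂) - vNEntropy ψ₁ := by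
    rw [cohACB, redB_prodState h₁tr, hS]
    ring
  have hABC : cohABC (prodState ψ₁ ψ₂) = vNEntropy (trLeft ψ₁) - vNEntropy ψ₁ := by
    rw [cohABC, vNEntropy_redBC_prodState h₁.1 h₁tr h₂.1 h₂tr, hS]
    ring
  refine ⟨hACB, hABC, fun v hv hψ₁ => ?_⟩
  have hpure : vNEntropy ψ₁ = 0 :=
    vNEntropy_eq_zero_of_isIdempotentElem h₁.1 (hψ₁ ▸ isIdempotentElem_vecMulVec_star hv)
  rw [Lq, hACB, hABC, hpure, sub_zero, sub_zero]

end
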